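/- arXiv:1909.13585 — 3 statements merged into one kernel-verified Lean document; each statement's English description precedes it below -/
import Mathlib

section
/- Let K and G be real symmetric n×n matrices with K positive definite, and suppose there exists a vector v ∈ ℝⁿ with vᵀGv < 0. Then the set {λ > 0 : there exists φ ≠ 0 with (K + λG)φ = 0} is nonempty and possesses a least element λ₁ (the fundamental buckling load factor). -/
/-!
Write `K = Q²` with `Q = K^{1/2}` invertible and put `A = Q⁻¹ G Q⁻¹`, a symmetric matrix congruent
to `G`. Then `K + λG = Q (1 + λA) Q`, so `λ > 0` is a buckling load factor exactly when `-1/λ` is a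
negative eigenvalue of `A`. The positive buckling load factors therefore form a finite set, and it
is nonempty: were all eigenvalues of `A` nonnegative, `A` and hence `G` would be positive
semidefinite, contradicting `vᵀGv < 0`.
-/

open Matrix
open scoped MatrixOrder

namespace Matrix

variable {ι : Type*} [Fintype ι] [DecidableEq ι]

lemma exists_mulVec_eq_zero_iff_not_isUnit {R : Type*} [Field R] {M : Matrix ι ι R} :
    (∃ φ ≠ 0, M *ᵥ φ = 0) ↔ ¬IsUnit M := by
  rw [exists_mulVec_eq_zero_iff, isUnit_iff_isUnit_det, isUnit_iff_ne_zero, not_not]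

def positiveBucklingLoadFactors (K G : Matrix ι ι ℝ) : Set ℝ :=
  {l | 0 < l ∧ ∃ φ : ι → ℝ, φ ≠ 0 ∧ (K + l • G) *ᵥ φ = 0}

/-- `K^{-1/2} G K^{-1/2}`. -/
noncomputable def pencilReduction (K G : Matrix ι ι ℝ) : Matrix ι ι ℝ :=
  (CFC.sqrt K)⁻¹ * G * (CFC.sqrt K)⁻¹

variable {K G : Matrix ι ι ℝ}

lemma isHermitian_pencilReduction (hG : G.IsHermitian) : (pencilReduction K G).IsHermitian := by
  have hQ : (CFC.sqrt K)⁻¹.IsHermitian := (CFC.sqrt_nonneg K).posSemidef.isHermitian.inv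
  have := isHermitian_conjTranspose_mul_mul (CFC.sqrt K)⁻¹ hG
  rwa [hQ.eq] at this

lemma PosDef.isUnit_sqrt (hK : K.PosDef) : IsUnit (CFC.sqrt K) :=
  (CFC.isUnit_sqrt_iff K hK.posSemidef.nonneg).mpr hK.isUnit

lemma sqrt_mul_pencilReduction_mul_sqrt (hK : K.PosDef) :
    CFC.sqrt K * pencilReduction K G * CFC.sqrt K = G := by
  have hQ := (isUnit_iff_isUnit_det _).mp hK.isUnit_sqrt
  simp only [pencilReduction, mul_assoc, nonsing_inv_mul _ hQ, mul_one,
    mul_nonsing_inv_cancel_left _ _ hQ]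

lemma add_smul_eq_sqrt_mul_mul_sqrt (hK : K.PosDef) (l : ℝ) :
    K + l • G = CFC.sqrt K * (1 + l • pencilReduction K G) * CFC.sqrt K := by
  rw [mul_add, add_mul, mul_one, CFC.sqrt_mul_sqrt_self K hK.posSemidef.nonneg, mul_smul_comm,
    smul_mul_assoc, sqrt_mul_pencilReduction_mul_sqrt hK]

lemma isUnit_add_smul_iff (hK : K.PosDef) {l : ℝ} (hl : l ≠ 0) :
    IsUnit (K + l • G) ↔ -l⁻¹ ∉ spectrum ℝ (pencilReduction K G) := by
  obtain ⟨Q, hQ⟩ := hK.isUnit_sqrt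
  have hshift : 1 + l • pencilReduction K G =
      Units.mk0 (-l) (neg_ne_zero.mpr hl) • (algebraMap ℝ _ (-l⁻¹) - pencilReduction K G) := by
    rw [Units.smul_mk0, smul_sub, Algebra.algebraMap_eq_smul_one, smul_smul]
    field_simp
    simp [sub_eq_add_neg]
  rw [add_smul_eq_sqrt_mul_mul_sqrt hK, ← hQ, Units.isUnit_mul_units, Units.isUnit_units_mul,
    hshift, isUnit_smul_iff, spectrum.mem_iff, not_not]

lemma mem_positiveBucklingLoadFactors_iff (hK : K.PosDef) {l : ℝ} :
    l ∈ positiveBucklingLoadFactors K G ↔ 0 < l ∧ -l⁻¹ ∈ spectrum ℝ (pencilReduction K G) := by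
  refine and_congr_right fun hl => ?_
  rw [exists_mulVec_eq_zero_iff_not_isUnit, isUnit_add_smul_iff hK hl.ne', not_not]

lemma positiveBucklingLoadFactors_eq_image (hK : K.PosDef) :
    positiveBucklingLoadFactors K G =
      (fun μ => -μ⁻¹) '' {μ ∈ spectrum ℝ (pencilReduction K G) | μ < 0} := by
  ext l
  rw [mem_positiveBucklingLoadFactors_iff hK]
  constructor
  · rintro ⟨hl, hμ⟩
    exact ⟨-l⁻¹, ⟨hμ, by simpa using hl⟩, by simp⟩
  · rintro ⟨μ, ⟨hμ, hμ0⟩, rfl⟩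
    exact ⟨by simpa using hμ0, by simpa using hμ⟩

lemma positiveBucklingLoadFactors_finite (hK : K.PosDef) :
    (positiveBucklingLoadFactors K G).Finite := by
  rw [positiveBucklingLoadFactors_eq_image hK]
  exact ((finite_spectrum _).sep _).image _

lemma exists_neg_mem_spectrum_pencilReduction (hK : K.PosDef) (hG : G.IsHermitian) {v : ι → ℝ}
    (hv : v ⬝ᵥ G *ᵥ v < 0) : ∃ μ ∈ spectrum ℝ (pencilReduction K G), μ < 0 := by
  by_contra! hnonneg
  have hA : (pencilReduction K G).PosSemidef :=
    posSemidef_iff_isHermitian_and_spectrum_nonneg.mpr ⟨isHermitian_pencilReduction hG, hnonneg⟩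
  have hGpsd := hA.conjTranspose_mul_mul_same (CFC.sqrt K)
  rw [(CFC.sqrt_nonneg K).posSemidef.isHermitian.eq, sqrt_mul_pencilReduction_mul_sqrt hK]
    at hGpsd
  exact hv.not_ge (by simpa using hGpsd.dotProduct_mulVec_nonneg v)

lemma positiveBucklingLoadFactors_nonempty (hK : K.PosDef) (hG : G.IsHermitian) {v : ι → ℝ}
    (hv : v ⬝ᵥ G *ᵥ v < 0) : (positiveBucklingLoadFactors K G).Nonempty := by
  obtain ⟨μ, hμ, hμ0⟩ := exists_neg_mem_spectrum_pencilReduction hK hG hv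
  rw [positiveBucklingLoadFactors_eq_image hK]
  exact ⟨_, μ, ⟨hμ, hμ0⟩, rfl⟩

end Matrix

theorem fundamental_blf_exists_general {n : ℕ} (K G : Matrix (Fin n) (Fin n) ℝ)
    (hGsymm : G.IsSymm) (hKpd : K.PosDef)
    (hneg : ∃ v : Fin n → ℝ, v ⬝ᵥ G.mulVec v < 0) :
    ∃ lam1 : ℝ,
      IsLeast {l : ℝ | 0 < l ∧ ∃ φ : Fin n → ℝ, φ ≠ 0 ∧ (K + l • G).mulVec φ = 0} lam1 := by
  obtain ⟨v, hv⟩ := hneg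
  have hfin := positiveBucklingLoadFactors_finite (G := G) hKpd
  have hne := positiveBucklingLoadFactors_nonempty hKpd hGsymm hv
  exact ⟨sInf _, hne.csInf_mem hfin, fun l hl => csInf_le hfin.bddBelow hl⟩

/-- For real symmetric `K, G` with `K` positive definite and
some vector `v` with `vᵀGv < 0`, the set of positive buckling load factors
`{λ > 0 : ∃ φ ≠ 0, (K + λG)φ = 0}` is nonempty and has a least element `λ₁`. -/
theorem fundamental_blf_exists {n : ℕ} (K G : Matrix (Fin n) (Fin n) ℝ)
    (hKsymm : K.IsSymm) (hGsymm : G.IsSymm) (hKpd : K.PosDef)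
    (hneg : ∃ v : Fin n → ℝ, v ⬝ᵥ G.mulVec v < 0) :
    ∃ lam1 : ℝ,
      IsLeast {l : ℝ | 0 < l ∧ ∃ φ : Fin n → ℝ, φ ≠ 0 ∧ (K + l • G).mulVec φ = 0} lam1 :=
  fundamental_blf_exists_general K G hGsymm hKpd hneg
end

section
/- Let t ↦ K(t) and t ↦ G(t) be differentiable maps from ℝ into the real symmetric n×n matrices, and let λ : ℝ → ℝ and φ : ℝ → ℝⁿ be differentiable and satisfy, for all t, the generalized eigenvalue equation (K(t) + λ(t)G(t))φ(t) = 0 together with the normalization φ(t)ᵀG(t)φ(t) = −1. Then for all t, λ'(t) = φ(t)ᵀ(K'(t) + λ(t)G'(t))φ(t). -/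
/-! Differentiating the identity `φᵀ(K + λG)φ = 0` gives three terms; the two containing `φ'`
vanish because `K + λG` is symmetric and kills `φ`, and the remaining one is
`φᵀ(K' + λG')φ + λ' φᵀGφ = φᵀ(K' + λG')φ - λ'`. -/

open Matrix Filter Topology

section

variable {𝕜 : Type*} [NontriviallyNormedField 𝕜] {m n : Type*} [Fintype m] [Fintype n]

theorem hasDerivAt_dotProduct_mulVec {x : 𝕜 → m → 𝕜} {M : 𝕜 → Matrix m n 𝕜} {y : 𝕜 → n → 𝕜}
    {x' : m → 𝕜} {M' : Matrix m n 𝕜} {y' : n → 𝕜} {t : 𝕜}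
    (hx : ∀ i, HasDerivAt (fun s => x s i) (x' i) t)
    (hM : ∀ i j, HasDerivAt (fun s => M s i j) (M' i j) t)
    (hy : ∀ j, HasDerivAt (fun s => y s j) (y' j) t) :
    HasDerivAt (fun s => x s ⬝ᵥ M s *ᵥ y s)
      (x' ⬝ᵥ M t *ᵥ y t + x t ⬝ᵥ M' *ᵥ y t + x t ⬝ᵥ M t *ᵥ y') t := by
  have hsum : HasDerivAt (fun s => ∑ i, ∑ j, x s i * (M s i j * y s j))
      (∑ i, ∑ j, (x' i * (M t i j * y t j)
        + x t i * (M' i j * y t j + M t i j * y' j))) t :=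
    HasDerivAt.fun_sum fun i _ => HasDerivAt.fun_sum fun j _ =>
      (hx i).mul ((hM i j).mul (hy j))
  convert hsum using 1
  · funext s
    simp only [dotProduct, mulVec, Finset.mul_sum]
  · simp only [dotProduct, mulVec, Finset.mul_sum, mul_add, add_assoc, ← Finset.sum_add_distrib]

theorem Matrix.IsSymm.dotProduct_deriv_mulVec_eq_zero {A : 𝕜 → Matrix n n 𝕜} {A' : Matrix n n 𝕜}
    {φ : 𝕜 → n → 𝕜} {φ' : n → 𝕜} {t : 𝕜} (hsymm : (A t).IsSymm)
    (hA : ∀ i j, HasDerivAt (fun s => A s i j) (A' i j) t)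
    (hφ : ∀ i, HasDerivAt (fun s => φ s i) (φ' i) t) (hker : ∀ᶠ s in 𝓝 t, A s *ᵥ φ s = 0) :
    φ t ⬝ᵥ A' *ᵥ φ t = 0 := by
  have hconst : HasDerivAt (fun s => φ s ⬝ᵥ A s *ᵥ φ s) 0 t := by
    refine (hasDerivAt_const t (0 : 𝕜)).congr_of_eventuallyEq ?_
    filter_upwards [hker] with s hs
    rw [hs, dotProduct_zero]
  have hker_t : A t *ᵥ φ t = 0 := hker.self_of_nhds
  have hleft : φ t ᵥ* A t = 0 := by
    rw [← mulVec_transpose, hsymm.eq, hker_t]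
  have hderiv := (hasDerivAt_dotProduct_mulVec hφ hA hφ).unique hconst
  rwa [hker_t, dotProduct_mulVec (φ t) (A t) φ', hleft, dotProduct_zero, zero_dotProduct,
    zero_add, add_zero] at hderiv

end

/-- If `t ↦ K(t)`, `t ↦ G(t)` are differentiable families of real
symmetric matrices (entrywise derivatives `K'`, `G'`) and differentiable `λ(t)`,
`φ(t)` satisfy `(K(t) + λ(t)G(t))φ(t) = 0` with normalization `φ(t)ᵀG(t)φ(t) = −1`,
then `λ'(t) = φ(t)ᵀ(K'(t) + λ(t)G'(t))φ(t)` for all `t`. -/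
theorem blf_sensitivity {n : ℕ}
    (K K' G G' : ℝ → Matrix (Fin n) (Fin n) ℝ)
    (hKsymm : ∀ t, (K t).IsSymm) (hGsymm : ∀ t, (G t).IsSymm)
    (hK' : ∀ t i j, HasDerivAt (fun s => K s i j) (K' t i j) t)
    (hG' : ∀ t i j, HasDerivAt (fun s => G s i j) (G' t i j) t)
    (lam lam' : ℝ → ℝ) (φ φ' : ℝ → Fin n → ℝ)
    (hlam : ∀ t, HasDerivAt lam (lam' t) t)
    (hφ : ∀ t i, HasDerivAt (fun s => φ s i) (φ' t i) t)
    (heig : ∀ t, (K t + lam t • G t).mulVec (φ t) = 0)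
    (hnorm : ∀ t, φ t ⬝ᵥ (G t).mulVec (φ t) = -1) :
    ∀ t, lam' t = φ t ⬝ᵥ (K' t + lam t • G' t).mulVec (φ t) := by
  intro t
  have hsymm : (K t + lam t • G t).IsSymm := (hKsymm t).add ((hGsymm t).smul (lam t))
  have hderiv : ∀ i j, HasDerivAt (fun s => (K s + lam s • G s) i j)
      ((K' t + lam t • G' t + lam' t • G t) i j) t := fun i j =>
    ((hK' t i j).fun_add ((hlam t).fun_mul (hG' t i j))).congr_deriv (by
      simp only [Matrix.add_apply, Matrix.smul_apply, smul_eq_mul]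
      ring)
  have hzero := hsymm.dotProduct_deriv_mulVec_eq_zero hderiv (hφ t) (.of_forall heig)
  rw [add_mulVec, dotProduct_add, smul_mulVec, dotProduct_smul, hnorm t, smul_eq_mul] at hzero
  linarith
end

section
/- Let A be a real m×n matrix whose i-th row aᵢᵀ is nonzero, and let b ∈ ℝ^m. Suppose x ∈ ℝⁿ satisfies x = Aᵀy for some y ∈ ℝ^m. Then the Kaczmarz update using row i, x⁺ = x + ((bᵢ − aᵢᵀx)/‖aᵢ‖²) aᵢ, satisfies x⁺ = Aᵀy⁺, where y⁺ agrees with y in all components except the i-th, and y⁺ᵢ = yᵢ + (bᵢ − (AAᵀy)ᵢ)/(AAᵀ)ᵢᵢ; that is, y⁺ is the Gauss–Seidel update of the i-th component for the system (AAᵀ)y = b. Hence the Kaczmarz iteration for Ax = b amounts to the Gauss–Seidel iteration applied to AAᵀ. -/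
open Matrix

/-- The Kaczmarz update for `Ax = b` using row `i`, applied to an
iterate of the form `x = Aᵀy`, equals `Aᵀy⁺` where `y⁺` is the Gauss–Seidel update of
the `i`-th component for the system `(AAᵀ)y = b`: the Kaczmarz iteration for `Ax = b`
amounts to the Gauss–Seidel iteration applied to `AAᵀ`. -/
theorem kaczmarz_is_gaussSeidel {m n : ℕ}
    (A : Matrix (Fin m) (Fin n) ℝ) (b : Fin m → ℝ) (i : Fin m)
    (hrow : A i ≠ 0)
    (x : Fin n → ℝ) (y : Fin m → ℝ) (hx : x = Aᵀ.mulVec y) :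
    x + ((b i - A i ⬝ᵥ x) / (A i ⬝ᵥ A i)) • A i =
      Aᵀ.mulVec (Function.update y i
        (y i + (b i - (A * Aᵀ).mulVec y i) / ((A * Aᵀ) i i))) := by
  set c := (b i - A i ⬝ᵥ x) / (A i ⬝ᵥ A i) with hc
  have h1 : (A * Aᵀ) i i = A i ⬝ᵥ A i := by simp [Matrix.mul_apply, dotProduct, Matrix.transpose_apply]
  have h2 : (A * Aᵀ).mulVec y i = A i ⬝ᵥ x := by
    subst hx
    simp [Matrix.mulVec, Matrix.mul_apply, dotProduct, Matrix.transpose_apply, Finset.mul_sum,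
      Finset.sum_mul, mul_comm, mul_assoc, mul_left_comm]
    rw [Finset.sum_comm]
  have hupd : Function.update y i (y i + (b i - (A * Aᵀ).mulVec y i) / ((A * Aᵀ) i i))
      = y + Pi.single i c := by
    funext j
    by_cases h : j = i
    · subst h; simp [h1, h2, hc]
    · simp [Function.update_of_ne h, Pi.single_apply, h]
  rw [hupd, Matrix.mulVec_add, ← hx]
  congr 1
  funext j
  simp [Matrix.mulVec, dotProduct, Pi.single_apply, Matrix.transpose_apply, mul_comm]
end
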